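/- If x ≪ y ≪ z with x, z in the closure of the chronology violating class [r], then y ∈ [r]; consequently, the boundary ∂[r] contains no point y with x ≪ y ≪ z for x, z ∈ closure([r]). -/

import Mathlib

open Set Topology

/-! Openness of `≪` lets a point of `closure [r]` that is `≪ y` be replaced by a point of `[r]`
that is still `≪ y`; transitivity through `r` then gives `r ≪ y`, and dually `y ≪ r`.
Since `[r]` is open, its frontier is disjoint from it. -/

section OpenRelation

variable {M : Type*} [TopologicalSpace M] {ll : M → M → Prop}

theorem isOpen_setOf_rel_left (hopen : IsOpen {p : M × M | ll p.1 p.2}) (x : M) :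
    IsOpen {y | ll x y} :=
  hopen.preimage (Continuous.prodMk_right x)

theorem isOpen_setOf_rel_right (hopen : IsOpen {p : M × M | ll p.1 p.2}) (x : M) :
    IsOpen {y | ll y x} :=
  hopen.preimage (Continuous.prodMk_left x)

theorem rel_of_mem_closure_setOf_rel_left [IsTrans M ll]
    (hopen : IsOpen {p : M × M | ll p.1 p.2}) {r x y : M}
    (hx : x ∈ closure {a | ll r a}) (hxy : ll x y) : ll r y := by
  obtain ⟨x', hx'y, hrx'⟩ := mem_closure_iff.mp hx _ (isOpen_setOf_rel_right hopen y) hxy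
  exact _root_.trans hrx' hx'y

theorem rel_of_mem_closure_setOf_rel_right [IsTrans M ll]
    (hopen : IsOpen {p : M × M | ll p.1 p.2}) {r y z : M}
    (hz : z ∈ closure {a | ll a r}) (hyz : ll y z) : ll y r := by
  obtain ⟨z', hyz', hz'r⟩ := mem_closure_iff.mp hz _ (isOpen_setOf_rel_left hopen y) hyz
  exact _root_.trans hyz' hz'r

end OpenRelation

theorem between_closure_mem_class_general
    {M : Type*} [TopologicalSpace M] (ll : M → M → Prop)
    (htrans : ∀ x y z, ll x y → ll y z → ll x z)
    (hopen : IsOpen {p : M × M | ll p.1 p.2})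
    (r : M) :
    let cls : Set M := {y | ll r y} ∩ {y | ll y r}
    (∀ x y z, x ∈ closure cls → z ∈ closure cls → ll x y → ll y z → y ∈ cls) ∧
    (∀ y ∈ frontier cls, ¬ ∃ x z, x ∈ closure cls ∧ z ∈ closure cls ∧ ll x y ∧ ll y z) := by
  intro cls
  have : IsTrans M ll := ⟨htrans⟩
  have mem_cls : ∀ x y z, x ∈ closure cls → z ∈ closure cls → ll x y → ll y z → y ∈ cls :=
    fun _ _ _ hx hz hxy hyz =>
      ⟨rel_of_mem_closure_setOf_rel_left hopen (closure_mono inter_subset_left hx) hxy,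
        rel_of_mem_closure_setOf_rel_right hopen (closure_mono inter_subset_right hz) hyz⟩
  refine ⟨mem_cls, ?_⟩
  rintro y hy ⟨x, z, hx, hz, hxy, hyz⟩
  have cls_open : IsOpen cls :=
    (isOpen_setOf_rel_left hopen r).inter (isOpen_setOf_rel_right hopen r)
  rw [cls_open.frontier_eq] at hy
  exact hy.2 (mem_cls x y z hx hz hxy hyz)

/-- If `x ≪ y ≪ z` with `x, z` in the closure of the chronology violating
class `[r]`, then `y ∈ [r]`; consequently no boundary point of `[r]` lies
chronologically between two points of `closure [r]`. -/
theorem between_closure_mem_class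
    {M : Type*} [TopologicalSpace M] (ll : M → M → Prop)
    (htrans : ∀ x y z, ll x y → ll y z → ll x z)
    (hopen : IsOpen {p : M × M | ll p.1 p.2})
    (r : M) (hr : ll r r) :
    let cls : Set M := {y | ll r y} ∩ {y | ll y r}
    (∀ x y z, x ∈ closure cls → z ∈ closure cls → ll x y → ll y z → y ∈ cls) ∧
    (∀ y ∈ frontier cls, ¬ ∃ x z, x ∈ closure cls ∧ z ∈ closure cls ∧ ll x y ∧ ll y z) :=
  between_closure_mem_class_general ll htrans hopen r
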